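/- arXiv:2603.28442 — 3 statements merged into one kernel-verified Lean document; each statement's English description precedes it below -/
import Mathlib

section
/- Suppose A : D(A) ⊂ H → H generates a strongly continuous group S(t) on a Hilbert space H, and let b₁,…,bₘ ∈ D(A) be such that V := span{b₁,…,bₘ} is an A-invariant subspace. Then for the mild solution y(t) = S(t)y₀ + ∫₀ᵗ S(t-s)Σₖ bₖ uₖ(s) ds of the controlled system, with T(t) := S(-t), one has T(t)y(t) ∈ span{y₀, b₁, …, bₘ} for every t ≥ 0. In particular, for any time points t₁,…,t_{n_t}, dim span{T(t₁)y(t₁),…,T(t_{n_t})y(t_{n_t})} ≤ min(m+1, n_t). -/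
/-!
Conjugating the variation-of-constants formula by the group gives
`S(-t) y(t) = y₀ + ∫₀ᵗ S(-s) (B u(s)) ds`, so everything reduces to `S(τ) V ⊆ V` for
`V = span{bᵢ}`. Writing `A bᵢ = ∑ⱼ cᵢⱼ bⱼ`, the family `(S(τ) bᵢ)ᵢ` solves the finite linear
system `w' = C w` in `Hᵐ`; since `τ ↦ exp(-τC) w(τ)` has derivative zero,
`S(τ) bᵢ = ∑ⱼ exp(τC)ᵢⱼ bⱼ ∈ V`. The rank bound is then a dimension count in
`span{y₀, b₁, …, bₘ}`.
-/

open MeasureTheory NormedSpace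

theorem ContinuousLinearEquiv.intervalIntegral_comp_comm {𝕜 E F : Type*} [RCLike 𝕜]
    [NormedAddCommGroup E] [NormedSpace 𝕜 E] [NormedSpace ℝ E]
    [NormedAddCommGroup F] [NormedSpace 𝕜 F] [NormedSpace ℝ F]
    (L : E ≃L[𝕜] F) (f : ℝ → E) {a b : ℝ} {μ : Measure ℝ} :
    ∫ x in a..b, L (f x) ∂μ = L (∫ x in a..b, f x ∂μ) := by
  simp_rw [intervalIntegral, L.integral_comp_comm, map_sub]

theorem Submodule.intervalIntegral_mem {E : Type*} [NormedAddCommGroup E] [NormedSpace ℝ E]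
    [CompleteSpace E] (V : Submodule ℝ E) [CompleteSpace V] {f : ℝ → E} (hf : ∀ x, f x ∈ V)
    {a b : ℝ} {μ : Measure ℝ} : ∫ x in a..b, f x ∂μ ∈ V := by
  have h := V.subtypeₗᵢ.intervalIntegral_comp_comm (a := a) (b := b) (μ := μ)
    fun x => ⟨f x, hf x⟩
  exact h ▸ (∫ x in a..b, (⟨f x, hf x⟩ : V) ∂μ).2

open scoped Matrix.Norms.Operator in
theorem Matrix.eq_sum_exp_smul_of_hasDerivAt {ι E : Type*} [Fintype ι] [DecidableEq ι]
    [NormedAddCommGroup E] [NormedSpace ℝ E] (C : Matrix ι ι ℝ) {w : ℝ → ι → E}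
    (hw : ∀ t i, HasDerivAt (fun s => w s i) (∑ j, C i j • w t j) t) (t : ℝ) (i : ι) :
    w t i = ∑ j, exp (t • C) i j • w 0 j := by
  have hentry : ∀ s k j,
      HasDerivAt (fun s : ℝ => exp (s • -C) k j) ((exp (s • -C) * -C) k j) s := fun s k j =>
    (Matrix.entryLinearMap ℝ ℝ k j).toContinuousLinearMap.hasFDerivAt.comp_hasDerivAt s
      (hasDerivAt_exp_smul_const (-C) s)
  have hderiv : ∀ k s, HasDerivAt (fun s => ∑ j, exp (s • -C) k j • w s j) 0 s := by
    intro k s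
    convert HasDerivAt.fun_sum (u := Finset.univ) fun j _ =>
      (hentry s k j).fun_smul (hw s j) using 1
    rw [Finset.sum_add_distrib, eq_comm, add_eq_zero_iff_eq_neg]
    simp only [Matrix.mul_apply, Matrix.neg_apply, mul_neg, neg_smul, Finset.sum_neg_distrib,
      neg_neg, Finset.sum_smul, Finset.smul_sum, smul_smul]
    exact Finset.sum_comm
  have hconst : ∀ k, ∑ j, exp (t • -C) k j • w t j = w 0 k := by
    intro k
    rw [is_const_of_deriv_eq_zero (fun s => (hderiv k s).differentiableAt)
      (fun s => (hderiv k s).deriv) t 0]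
    simp [Matrix.one_apply]
  have hinv : exp (t • C) * exp (t • -C) = 1 := by
    rw [smul_neg, ← Matrix.exp_add_of_commute _ _ (Commute.refl (t • C)).neg_right,
      add_neg_cancel, exp_zero]
  calc w t i = ∑ j, (exp (t • C) * exp (t • -C)) i j • w t j := by
        rw [hinv]; simp [Matrix.one_apply]
    _ = ∑ k, exp (t • C) i k • ∑ j, exp (t • -C) k j • w t j := by
      simp only [Matrix.mul_apply, Finset.sum_smul, Finset.smul_sum, smul_smul]
      exact Finset.sum_comm
    _ = ∑ k, exp (t • C) i k • w 0 k := by simp only [hconst]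

section OneParameterGroup

variable {E : Type*} [NormedAddCommGroup E] [NormedSpace ℝ E] {S : ℝ → E →L[ℝ] E}

theorem apply_neg_apply_of_map_add (hS0 : S 0 = ContinuousLinearMap.id ℝ E)
    (hSadd : ∀ s t, S (s + t) = (S s).comp (S t)) (t : ℝ) (x : E) : S (-t) (S t x) = x := by
  rw [← ContinuousLinearMap.comp_apply, ← hSadd, neg_add_cancel, hS0,
    ContinuousLinearMap.id_apply]

def equivOfMapAdd (hS0 : S 0 = ContinuousLinearMap.id ℝ E)
    (hSadd : ∀ s t, S (s + t) = (S s).comp (S t)) (t : ℝ) : E ≃L[ℝ] E :=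
  .equivOfInverse (S t) (S (-t)) (apply_neg_apply_of_map_add hS0 hSadd t)
    fun x => by simpa using apply_neg_apply_of_map_add hS0 hSadd (-t) x

theorem neg_apply_mild_solution (hS0 : S 0 = ContinuousLinearMap.id ℝ E)
    (hSadd : ∀ s t, S (s + t) = (S s).comp (S t)) (t : ℝ) (y₀ : E) (f : ℝ → E) :
    S (-t) (S t y₀ + ∫ s in (0:ℝ)..t, S (t - s) (f s)) =
      y₀ + ∫ s in (0:ℝ)..t, S (-s) (f s) := by
  rw [map_add, apply_neg_apply_of_map_add hS0 hSadd]
  congr 1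
  -- `S (-t)` is invertible, so it commutes with the integral even without integrability
  have h := (equivOfMapAdd hS0 hSadd (-t)).intervalIntegral_comp_comm (a := 0) (b := t)
    (μ := volume) fun s => S (t - s) (f s)
  simp only [equivOfMapAdd, ContinuousLinearEquiv.equivOfInverse_apply] at h
  rw [← h]
  congr 1 with s
  rw [← ContinuousLinearMap.comp_apply, ← hSadd, show -t + (t - s) = -s by ring]

theorem hasDerivAt_apply_of_hasDerivAt_zero (hSadd : ∀ s t, S (s + t) = (S s).comp (S t))
    {x a : E} (h : HasDerivAt (fun t => S t x) a 0) (r : ℝ) :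
    HasDerivAt (fun t => S t x) (S r a) r := by
  have hshift : HasDerivAt (fun t => S (t - r) x) a r :=
    HasDerivAt.comp_sub_const (f := fun t => S t x) r r (by simpa using h)
  convert (S r).hasFDerivAt.comp_hasDerivAt r hshift using 1
  ext t
  simp [← ContinuousLinearMap.comp_apply, ← hSadd]

theorem apply_mem_span_range_of_hasDerivAt {ι : Type*} [Fintype ι] [DecidableEq ι]
    (hS0 : S 0 = ContinuousLinearMap.id ℝ E) (hSadd : ∀ s t, S (s + t) = (S s).comp (S t))
    {b a : ι → E} (hgen : ∀ i, HasDerivAt (fun t => S t (b i)) (a i) 0)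
    (ha : ∀ i, a i ∈ Submodule.span ℝ (Set.range b)) (t : ℝ) {x : E}
    (hx : x ∈ Submodule.span ℝ (Set.range b)) : S t x ∈ Submodule.span ℝ (Set.range b) := by
  choose c hc using fun i => (Submodule.mem_span_range_iff_exists_fun ℝ).mp (ha i)
  have hw : ∀ t i, HasDerivAt (fun s => S s (b i)) (∑ j, Matrix.of c i j • S t (b j)) t :=
    fun t i => by simpa [← hc i] using hasDerivAt_apply_of_hasDerivAt_zero hSadd (hgen i) t
  have hbasis : ∀ i, S t (b i) ∈ Submodule.span ℝ (Set.range b) := fun i => by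
    rw [Matrix.eq_sum_exp_smul_of_hasDerivAt (Matrix.of c) (w := fun s i => S s (b i)) hw t i]
    refine Submodule.sum_mem _ fun j _ => Submodule.smul_mem _ _ ?_
    simpa [hS0] using Submodule.subset_span (Set.mem_range_self j)
  exact (Submodule.span_le (p := (Submodule.span ℝ (Set.range b)).comap (S t).toLinearMap)).mpr
    (Set.range_subset_iff.mpr hbasis) hx

end OneParameterGroup

theorem shifted_snapshots_low_rank_general
    {H : Type*} [NormedAddCommGroup H] [InnerProductSpace ℝ H] [CompleteSpace H]
    (S : ℝ → H →L[ℝ] H)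
    (hS0 : S 0 = ContinuousLinearMap.id ℝ H)
    (hSadd : ∀ s t : ℝ, S (s + t) = (S s).comp (S t))
    (m : ℕ) (b : Fin m → H) (A : H → H)
    -- each `bᵢ` lies in the domain of the generator `A` of the group `S`
    (hgen : ∀ i, HasDerivAt (fun t => S t (b i)) (A (b i)) 0)
    -- `span{b₁,…,bₘ}` is `A`-invariant
    (hAinv : ∀ i, A (b i) ∈ Submodule.span ℝ (Set.range b))
    (T : ℝ) (y₀ : H) (u : ℝ → Fin m → ℝ)
    (y : ℝ → H)
    -- `y` is the mild solution of `ẏ = Ay + Bu`, `y(0) = y₀`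
    (hy : ∀ t, y t = S t y₀ + ∫ s in (0:ℝ)..t, S (t - s) (∑ k, u s k • b k)) :
    (∀ t : ℝ, 0 ≤ t →
        S (-t) (y t) ∈ Submodule.span ℝ ({y₀} ∪ Set.range b)) ∧
    (∀ (nt : ℕ) (tp : Fin nt → ℝ), (∀ j, tp j ∈ Set.Icc (0:ℝ) T) →
        Module.finrank ℝ
          (Submodule.span ℝ (Set.range fun j => S (-(tp j)) (y (tp j))))
          ≤ min (m + 1) nt) := by
  set V := Submodule.span ℝ (Set.range b)
  have : FiniteDimensional ℝ V := FiniteDimensional.span_of_finite ℝ (Set.finite_range b)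
  have hsnap : ∀ t, S (-t) (y t) ∈ Submodule.span ℝ ({y₀} ∪ Set.range b) := fun t => by
    rw [hy, neg_apply_mild_solution hS0 hSadd]
    refine add_mem (Submodule.subset_span (.inl rfl))
      (Submodule.span_mono Set.subset_union_right (V.intervalIntegral_mem fun s => ?_))
    exact apply_mem_span_range_of_hasDerivAt hS0 hSadd hgen hAinv _
      (Submodule.sum_mem _ fun k _ => Submodule.smul_mem _ _ (Submodule.subset_span ⟨k, rfl⟩))
  refine ⟨fun t _ => hsnap t, fun nt tp _ => le_min ?_ ?_⟩
  · rw [← Matrix.range_cons] at hsnap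
    have : FiniteDimensional ℝ (Submodule.span ℝ (Set.range (Matrix.vecCons y₀ b))) :=
      .span_of_finite ℝ (Set.finite_range _)
    calc _ ≤ (Set.range (Matrix.vecCons y₀ b)).finrank ℝ :=
          Submodule.finrank_mono <|
            Submodule.span_le.mpr (Set.range_subset_iff.mpr fun j => hsnap _)
      _ ≤ m + 1 := by simpa using finrank_range_le_card (R := ℝ) (Matrix.vecCons y₀ b)
  · simpa [Set.finrank] using finrank_range_le_card (R := ℝ) fun j => S (-(tp j)) (y (tp j))

/-- Let `A` generate a strongly continuous group `S(t)` on a Hilbert space `H`, and let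
`b₁,…,bₘ ∈ D(A)` span an `A`-invariant subspace. Then for the mild solution
`y(t) = S(t)y₀ + ∫₀ᵗ S(t-s) Σₖ bₖ uₖ(s) ds` of the controlled system, with `T(t) := S(-t)`,
one has `T(t)y(t) ∈ span{y₀, b₁, …, bₘ}` for every `t ≥ 0`; in particular, for any time points
`t₁,…,t_{n_t}`, `dim span{T(t₁)y(t₁),…,T(t_{n_t})y(t_{n_t})} ≤ min(m+1, n_t)`. -/
theorem shifted_snapshots_low_rank
    {H : Type*} [NormedAddCommGroup H] [InnerProductSpace ℝ H] [CompleteSpace H]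
    (S : ℝ → H →L[ℝ] H)
    (hS0 : S 0 = ContinuousLinearMap.id ℝ H)
    (hSadd : ∀ s t : ℝ, S (s + t) = (S s).comp (S t))
    (hScont : ∀ x : H, Continuous fun t => S t x)
    (m : ℕ) (b : Fin m → H) (A : H → H)
    -- each `bᵢ` lies in the domain of the generator `A` of the group `S`
    (hgen : ∀ i, HasDerivAt (fun t => S t (b i)) (A (b i)) 0)
    -- `span{b₁,…,bₘ}` is `A`-invariant
    (hAinv : ∀ i, A (b i) ∈ Submodule.span ℝ (Set.range b))
    (T : ℝ) (hT : 0 < T) (y₀ : H) (u : ℝ → Fin m → ℝ)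
    -- `u ∈ L²(0,T;ℝᵐ)`
    (humeas : ∀ i, Measurable fun s => u s i)
    (hu : IntervalIntegrable (fun s => ∑ k, (u s k) ^ 2) volume 0 T)
    (y : ℝ → H)
    -- `y` is the mild solution of `ẏ = Ay + Bu`, `y(0) = y₀`
    (hy : ∀ t, y t = S t y₀ + ∫ s in (0:ℝ)..t, S (t - s) (∑ k, u s k • b k)) :
    (∀ t : ℝ, 0 ≤ t →
        S (-t) (y t) ∈ Submodule.span ℝ ({y₀} ∪ Set.range b)) ∧
    (∀ (nt : ℕ) (tp : Fin nt → ℝ), (∀ j, tp j ∈ Set.Icc (0:ℝ) T) →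
        Module.finrank ℝ
          (Submodule.span ℝ (Set.range fun j => S (-(tp j)) (y (tp j))))
          ≤ min (m + 1) nt) :=
  shifted_snapshots_low_rank_general S hS0 hSadd m b A hgen hAinv T y₀ u y hy
end

section
/- Let V be a finite-dimensional subspace of the domain of the generator A of a strongly continuous semigroup S(t) on a Banach space X, such that A(V) ⊆ V. Then V is invariant under the semigroup: S(t)V ⊆ V for all t ≥ 0. -/
/-!
Since `A` maps `V` into itself, uniqueness of derivatives makes `A` a linear endomorphism `B` of
the finite-dimensional space `V`. Both `t ↦ S(t)|_V` and `t ↦ exp (t B)`, viewed as operators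
`V → X`, solve the linear ODE `U' = U ∘ B` with `U(0)` the inclusion; finite-dimensionality of
`V` lets the pointwise derivatives of the semigroup be read as a derivative in operator norm, so
ODE uniqueness gives `S(t)|_V = exp (t B)`, which takes values in `V`.
-/

open Set Module NormedSpace ContinuousLinearMap

theorem hasDerivWithinAt_clm_apply {𝕜 E F : Type*} [NontriviallyNormedField 𝕜] [CompleteSpace 𝕜]
    [NormedAddCommGroup E] [NormedSpace 𝕜 E] [NormedAddCommGroup F] [NormedSpace 𝕜 F]
    [FiniteDimensional 𝕜 E] {L : 𝕜 → E →L[𝕜] F} {L' : E →L[𝕜] F} {s : Set 𝕜} {x : 𝕜} :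
    HasDerivWithinAt L L' s x ↔ ∀ y, HasDerivWithinAt (fun q ↦ L q y) (L' y) s x := by
  refine ⟨fun h y ↦ h.clm_apply (hasDerivWithinAt_const _ _ y) |>.congr_deriv (by simp),
    fun h ↦ ?_⟩
  let e : (E →L[𝕜] F) ≃L[𝕜] Fin (finrank 𝕜 E) → F :=
    ((ContinuousLinearEquiv.ofFinrankEq (finrank_fin_fun 𝕜).symm).arrowCongr
      (1 : F ≃L[𝕜] F)).trans (ContinuousLinearEquiv.piRing _)
  have he : HasDerivWithinAt (fun q ↦ e (L q)) (e L') s x :=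
    hasDerivWithinAt_pi.mpr fun i ↦ h _
  simpa [Function.comp_def] using e.symm.hasFDerivAt.comp_hasDerivWithinAt x he

section Semigroup

variable {X : Type*} [NormedAddCommGroup X] [NormedSpace ℝ X] {S : ℝ → X →L[ℝ] X}

theorem hasDerivWithinAt_semigroup_apply (hS0 : S 0 = ContinuousLinearMap.id ℝ X)
    (hSadd : ∀ s t : ℝ, 0 ≤ s → 0 ≤ t → S (s + t) = (S s).comp (S t)) {v y : X}
    (hv : HasDerivWithinAt (fun t ↦ S t v) y (Ici 0) 0) {t : ℝ} (ht : 0 ≤ t) :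
    HasDerivWithinAt (fun τ ↦ S τ v) (S t y) (Ici t) t := by
  have hshift : HasDerivWithinAt (fun τ ↦ S (τ - t) v) y (Ici t) t := by
    have := hv.scomp_of_eq t ((hasDerivWithinAt_id t _).sub_const t)
      (fun τ hτ ↦ sub_nonneg.2 (mem_Ici.1 hτ)) (sub_self t).symm
    simpa [Function.comp_def] using this
  refine ((S t).hasFDerivAt.comp_hasDerivWithinAt t hshift).congr (fun τ hτ ↦ ?_) ?_
  · simp [← comp_apply, ← hSadd t (τ - t) ht (sub_nonneg.2 hτ)]
  · simp [hS0]

theorem semigroup_comp_eq_comp_exp (hS0 : S 0 = ContinuousLinearMap.id ℝ X)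
    (hSadd : ∀ s t : ℝ, 0 ≤ s → 0 ≤ t → S (s + t) = (S s).comp (S t))
    (hScont : ∀ x : X, ContinuousOn (fun t ↦ S t x) (Ici 0))
    {E : Type*} [NormedAddCommGroup E] [NormedSpace ℝ E] [FiniteDimensional ℝ E]
    (J : E →L[ℝ] X) (B : E →L[ℝ] E)
    (hB : ∀ v, HasDerivWithinAt (fun t ↦ S t (J v)) (J (B v)) (Ici 0) 0) {t : ℝ} (ht : 0 ≤ t) :
    (S t).comp J = J.comp (exp (t • B)) := by
  let F : (E →L[ℝ] X) →L[ℝ] (E →L[ℝ] X) := (compL ℝ E E X).flip B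
  have hf : ∀ τ, 0 ≤ τ → HasDerivWithinAt (fun τ ↦ (S τ).comp J) (F ((S τ).comp J)) (Ici τ) τ :=
    fun τ hτ ↦ hasDerivWithinAt_clm_apply.2 fun v ↦
      hasDerivWithinAt_semigroup_apply hS0 hSadd (hB v) hτ
  have hg : ∀ τ, HasDerivAt (fun τ : ℝ ↦ J.comp (exp (τ • B))) (F (J.comp (exp (τ • B)))) τ :=
    fun τ ↦ (compL ℝ E E X J).hasFDerivAt.comp_hasDerivAt τ (hasDerivAt_exp_smul_const B τ)
  refine ODE_solution_unique (v := fun _ ↦ F) (fun _ ↦ F.lipschitz) ?_ (fun τ hτ ↦ hf τ hτ.1)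
    (fun τ _ ↦ (hg τ).continuousAt.continuousWithinAt) (fun τ _ ↦ (hg τ).hasDerivWithinAt) ?_
    ⟨ht, le_rfl⟩
  · exact continuousOn_clm_apply.2 fun v ↦ (hScont _).mono Icc_subset_Ici_self
  · ext v; simp [hS0]

theorem exists_clm_coe_apply_eq_of_hasDerivWithinAt {V : Submodule ℝ X} [FiniteDimensional ℝ V]
    {A : X → X} (hgen : ∀ v ∈ V, HasDerivWithinAt (fun t ↦ S t v) (A v) (Ici 0) 0)
    (hAinv : ∀ v ∈ V, A v ∈ V) : ∃ B : V →L[ℝ] V, ∀ v : V, (B v : X) = A v := by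
  have hU : UniqueDiffWithinAt ℝ (Ici (0 : ℝ)) 0 := uniqueDiffOn_Ici 0 0 self_mem_Ici
  let B : V →ₗ[ℝ] V :=
    { toFun := fun v ↦ ⟨A v, hAinv v v.2⟩
      map_add' := fun x y ↦ Subtype.ext <| hU.eq_deriv _ (hgen _ (x + y).2) <| by
        simpa only [Submodule.coe_add, map_add, Pi.add_def] using (hgen x x.2).add (hgen y y.2)
      map_smul' := fun c x ↦ Subtype.ext <| hU.eq_deriv _ (hgen _ (c • x).2) <| by
        simpa only [Submodule.coe_smul, map_smul, Pi.smul_def, RingHom.id_apply]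
          using (hgen x x.2).const_smul c }
  exact ⟨LinearMap.toContinuousLinearMap B, fun _ ↦ rfl⟩

end Semigroup

theorem finiteDimensional_generator_invariant_semigroup_invariant_general
    {X : Type*} [NormedAddCommGroup X] [NormedSpace ℝ X]
    (S : ℝ → X →L[ℝ] X)
    (hS0 : S 0 = ContinuousLinearMap.id ℝ X)
    (hSadd : ∀ s t : ℝ, 0 ≤ s → 0 ≤ t → S (s + t) = (S s).comp (S t))
    (hScont : ∀ x : X, ContinuousOn (fun t => S t x) (Set.Ici (0:ℝ)))
    (V : Submodule ℝ X) [FiniteDimensional ℝ V] (A : X → X)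
    -- `V` is contained in the domain of the generator `A`
    (hgen : ∀ v ∈ V, HasDerivWithinAt (fun t => S t v) (A v) (Set.Ici (0:ℝ)) 0)
    -- `A(V) ⊆ V`
    (hAinv : ∀ v ∈ V, A v ∈ V) :
    ∀ t : ℝ, 0 ≤ t → ∀ v ∈ V, S t v ∈ V := by
  intro t ht v hv
  obtain ⟨B, hB⟩ := exists_clm_coe_apply_eq_of_hasDerivWithinAt hgen hAinv
  have hexp := semigroup_comp_eq_comp_exp hS0 hSadd hScont V.subtypeL B
    (fun w ↦ by simpa [hB] using hgen w w.2) ht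
  have hSv : S t v = _ := congr($hexp ⟨v, hv⟩)
  exact hSv ▸ Submodule.coe_mem _

/-- Let `V` be a finite-dimensional subspace of the domain of the generator `A` of a strongly
continuous semigroup `S(t)` on a Banach space `X`, with `A(V) ⊆ V`. Then `V` is invariant
under the semigroup: `S(t)V ⊆ V` for all `t ≥ 0`. -/
theorem finiteDimensional_generator_invariant_semigroup_invariant
    {X : Type*} [NormedAddCommGroup X] [NormedSpace ℝ X] [CompleteSpace X]
    (S : ℝ → X →L[ℝ] X)
    (hS0 : S 0 = ContinuousLinearMap.id ℝ X)
    (hSadd : ∀ s t : ℝ, 0 ≤ s → 0 ≤ t → S (s + t) = (S s).comp (S t))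
    (hScont : ∀ x : X, ContinuousOn (fun t => S t x) (Set.Ici (0:ℝ)))
    (V : Submodule ℝ X) [FiniteDimensional ℝ V] (A : X → X)
    -- `V` is contained in the domain of the generator `A`
    (hgen : ∀ v ∈ V, HasDerivWithinAt (fun t => S t v) (A v) (Set.Ici (0:ℝ)) 0)
    -- `A(V) ⊆ V`
    (hAinv : ∀ v ∈ V, A v ∈ V) :
    ∀ t : ℝ, 0 ≤ t → ∀ v ∈ V, S t v ∈ V :=
  finiteDimensional_generator_invariant_semigroup_invariant_general S hS0 hSadd hScont V A hgen
    hAinv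
end

section
/- Suppose α solves αᵀα̇ = αᵀB₁(z)u pointwise a.e. on [0,T] (i.e., (1/2)d/dt‖α(t)‖² = α(t)ᵀB₁(z(t))u(t)), where ‖B₁(z(t))u(t)‖ ≤ √ℓ·β·‖u(t)‖ for all t with β := ‖B‖. If ‖u‖²_{L²(0,T;ℝᵐ)} < ‖α(0)‖²/(β²·e·T·ℓ), then for all t ∈ [0,T]: T·ℓ·β²·ζ < ‖α(t)‖² < (e+1)‖α(0)‖², where ζ := ‖α(0)‖²/(β²·e·T·ℓ) - ‖u‖²_{L²(0,T;ℝᵐ)}. -/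
/-!
Write `E = ‖α‖²`. The energy identity and Cauchy–Schwarz give `|E'| ≤ 2 √E · √ℓ |β| ‖u‖`, so
`√E` moves by at most `b = √ℓ |β| ∫₀ᵀ ‖u‖`, and `b² ≤ T ℓ β² ‖u‖²_{L²} < E(0) / e` by
Cauchy–Schwarz in time and the smallness of `u`. Squaring `√E(0) - b ≤ √E(t) ≤ √E(0) + b`
gives both bounds because `e > 2`.
-/

open MeasureTheory Matrix Set Filter Topology

lemma abs_dotProduct_le_sqrt_mul_sqrt {n : Type*} [Fintype n] (v w : n → ℝ) :
    |v ⬝ᵥ w| ≤ √(∑ i, v i ^ 2) * √(∑ i, w i ^ 2) := by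
  have hle := Real.sum_mul_le_sqrt_mul_sqrt Finset.univ v w
  have hneg := Real.sum_mul_le_sqrt_mul_sqrt Finset.univ (-v) w
  simp only [Pi.neg_apply, neg_mul, Finset.sum_neg_distrib, neg_sq] at hneg
  exact abs_le.2 ⟨by rw [dotProduct]; linarith, hle⟩

lemma IntervalIntegrable.sqrt {g : ℝ → ℝ} {a b : ℝ} (hg : IntervalIntegrable g volume a b) :
    IntervalIntegrable (fun s => √(g s)) volume a b := by
  refine ((intervalIntegrable_const (c := 1)).add hg.abs).mono_fun'
    (Real.continuous_sqrt.comp_aestronglyMeasurable hg.def'.aestronglyMeasurable) ?_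
  refine Eventually.of_forall fun s => ?_
  dsimp only
  rw [Real.norm_of_nonneg (Real.sqrt_nonneg _), Real.sqrt_le_iff]
  exact ⟨by positivity, by nlinarith [abs_nonneg (g s), le_abs_self (g s)]⟩

lemma sq_integral_sqrt_le {g : ℝ → ℝ} {a b : ℝ} (hab : a ≤ b)
    (hg : IntervalIntegrable g volume a b) (hg₀ : ∀ s ∈ Icc a b, 0 ≤ g s) :
    (∫ s in a..b, √(g s)) ^ 2 ≤ (b - a) * ∫ s in a..b, g s := by
  rcases hab.eq_or_lt with rfl | hlt
  · simp
  set I := ∫ s in a..b, √(g s)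
  set m := I / (b - a)
  -- Cauchy–Schwarz: integrate `2 m √g ≤ g + m²`, where `m` is the mean of `√g`.
  have hpt : ∀ s ∈ Icc a b, 2 * m * √(g s) ≤ g s + m ^ 2 := fun s hs => by
    nlinarith [sq_nonneg (√(g s) - m), Real.sq_sqrt (hg₀ s hs)]
  have hint := intervalIntegral.integral_mono_on hab (hg.sqrt.const_mul (2 * m))
    (hg.add intervalIntegrable_const) hpt
  rw [intervalIntegral.integral_const_mul, intervalIntegral.integral_add hg intervalIntegrable_const,
    intervalIntegral.integral_const, smul_eq_mul] at hint
  have hm : (b - a) * m = I := mul_div_cancel₀ I (sub_pos.2 hlt).ne'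
  nlinarith [mul_le_mul_of_nonneg_left hint (sub_pos.2 hlt).le]

section SqrtOfEnergy

variable {E E' c : ℝ → ℝ} {a b : ℝ}

-- `√E` may fail to be differentiable where `E` vanishes, so we first work with `√(E + ε)`.
lemma abs_sqrt_add_sub_sqrt_add_le_integral (hab : a ≤ b) (hE : ∀ s ∈ Icc a b, 0 ≤ E s)
    (hderiv : ∀ s ∈ Icc a b, HasDerivAt E (E' s) s)
    (hc : IntervalIntegrable c volume a b) (hc₀ : ∀ s ∈ Icc a b, 0 ≤ c s)
    (hE' : ∀ᵐ s, s ∈ Icc a b → |E' s| ≤ 2 * √(E s) * c s) {ε : ℝ} (hε : 0 < ε) :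
    |√(E b + ε) - √(E a + ε)| ≤ ∫ s in a..b, c s := by
  set f := fun s => √(E s + ε)
  set f' := fun s => E' s / (2 * √(E s + ε))
  have hf : ∀ s ∈ Icc a b, HasDerivAt f (f' s) s := fun s hs =>
    ((hderiv s hs).add_const ε).sqrt (by linarith [hE s hs])
  have hf' : ∀ᵐ s, s ∈ Ioc a b → ‖f' s‖ ≤ c s := by
    filter_upwards [hE'] with s hs hIoc
    have hmem := Ioc_subset_Icc_self hIoc
    have hpos : 0 < 2 * √(E s + ε) := by
      have := Real.sqrt_pos.2 (show 0 < E s + ε by linarith [hE s hmem])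
      positivity
    rw [Real.norm_eq_abs, abs_div, abs_of_pos hpos, div_le_iff₀ hpos]
    calc |E' s| ≤ 2 * √(E s) * c s := hs hmem
      _ ≤ 2 * √(E s + ε) * c s := by
        gcongr
        · exact hc₀ s hmem
        · linarith
      _ = c s * (2 * √(E s + ε)) := by ring
  have hf'_int : IntervalIntegrable f' volume a b := by
    refine hc.mono_fun' ?_ ?_
    · refine (measurable_deriv f).aestronglyMeasurable.congr ?_
      rw [uIoc_of_le hab]
      filter_upwards [ae_restrict_mem measurableSet_Ioc] with s hs
      exact (hf s (Ioc_subset_Icc_self hs)).deriv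
    · rw [uIoc_of_le hab]
      exact (ae_restrict_iff' measurableSet_Ioc).2 hf'
  have hftc : ∫ s in a..b, f' s = f b - f a :=
    intervalIntegral.integral_eq_sub_of_hasDerivAt (fun s hs => hf s (uIcc_of_le hab ▸ hs)) hf'_int
  rw [← Real.norm_eq_abs, ← hftc]
  exact intervalIntegral.norm_integral_le_of_norm_le hab hf' hc

lemma abs_sqrt_sub_sqrt_le_integral (hab : a ≤ b) (hE : ∀ s ∈ Icc a b, 0 ≤ E s)
    (hderiv : ∀ s ∈ Icc a b, HasDerivAt E (E' s) s)
    (hc : IntervalIntegrable c volume a b) (hc₀ : ∀ s ∈ Icc a b, 0 ≤ c s)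
    (hE' : ∀ᵐ s, s ∈ Icc a b → |E' s| ≤ 2 * √(E s) * c s) :
    |√(E b) - √(E a)| ≤ ∫ s in a..b, c s := by
  have hlim : Tendsto (fun ε => |√(E b + ε) - √(E a + ε)|) (𝓝[>] 0)
      (𝓝 |√(E b) - √(E a)|) := by
    have hcont : Continuous fun ε => |√(E b + ε) - √(E a + ε)| := by fun_prop
    simpa using (hcont.tendsto 0).mono_left nhdsWithin_le_nhds
  exact le_of_tendsto hlim (eventually_nhdsWithin_of_forall fun ε hε =>
    abs_sqrt_add_sub_sqrt_add_le_integral hab hE hderiv hc hc₀ hE' hε)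

end SqrtOfEnergy

lemma abs_sqrt_sum_sq_sub_le_integral {ℓ m : ℕ} {a b t K : ℝ} {α : ℝ → Fin ℓ → ℝ}
    {u : ℝ → Fin m → ℝ} {A : ℝ → Matrix (Fin ℓ) (Fin m) ℝ} {g' : ℝ → ℝ} (ht : t ∈ Icc a b)
    (hu : IntervalIntegrable (fun s => √(∑ k, u s k ^ 2)) volume a b)
    (hA : ∀ s v, √(∑ i, (A s *ᵥ v) i ^ 2) ≤ K * √(∑ j, v j ^ 2))
    (hderiv : ∀ s ∈ Icc a b, HasDerivAt (fun s => ∑ i, α s i ^ 2) (g' s) s)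
    (henergy : ∀ᵐ s, s ∈ Icc a b → 1 / 2 * g' s = α s ⬝ᵥ A s *ᵥ u s) :
    |√(∑ i, α t i ^ 2) - √(∑ i, α a i ^ 2)| ≤ |K| * ∫ s in a..b, √(∑ k, u s k ^ 2) := by
  have hc : IntervalIntegrable (fun s => |K| * √(∑ k, u s k ^ 2)) volume a b := hu.const_mul _
  have hderiv_le : ∀ᵐ s, s ∈ Icc a t →
      |g' s| ≤ 2 * √(∑ i, α s i ^ 2) * (|K| * √(∑ k, u s k ^ 2)) := by
    filter_upwards [henergy] with s hs hmem
    rw [show g' s = 2 * (α s ⬝ᵥ A s *ᵥ u s) by linarith [hs (Icc_subset_Icc_right ht.2 hmem)],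
      abs_mul, abs_two, mul_assoc]
    gcongr
    exact (abs_dotProduct_le_sqrt_mul_sqrt _ _).trans
      (mul_le_mul_of_nonneg_left ((hA _ _).trans (by gcongr; exact le_abs_self K))
        (Real.sqrt_nonneg _))
  rw [← intervalIntegral.integral_const_mul]
  exact (abs_sqrt_sub_sqrt_le_integral ht.1 (fun s _ => by positivity)
      (fun s hs => hderiv s (Icc_subset_Icc_right ht.2 hs))
      (hc.mono_set (by
        rw [uIcc_of_le ht.1, uIcc_of_le (ht.1.trans ht.2)]
        exact Icc_subset_Icc_right ht.2))
      (fun s _ => by positivity) hderiv_le).trans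
    (intervalIntegral.integral_mono_interval le_rfl ht.1 ht.2
      (Eventually.of_forall fun s => by positivity) hc)

lemma sq_bounds_of_abs_sub_le {x a b W e : ℝ} (ha : 0 ≤ a) (he : 2 < e) (hxa : |x - a| ≤ b)
    (hbW : b ^ 2 ≤ W) (hW : W < a ^ 2 / e) :
    a ^ 2 / e - W < x ^ 2 ∧ x ^ 2 < (e + 1) * a ^ 2 := by
  obtain ⟨hlo, hhi⟩ := abs_le.1 hxa
  have he₀ : 0 < e := by linarith
  have hW' : W * e < a ^ 2 := (lt_div_iff₀ he₀).1 hW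
  have hb₀ : 0 ≤ b := (abs_nonneg _).trans hxa
  have hba : b ≤ a := by nlinarith
  have hlow : (a - b) ^ 2 ≤ x ^ 2 := pow_le_pow_left₀ (by linarith) (by linarith) 2
  have hhigh : x ^ 2 ≤ (a + b) ^ 2 := pow_le_pow_left₀ (by linarith) (by linarith) 2
  have ha₀ : 0 < a ^ 2 := by nlinarith
  have hdiv : a ^ 2 / e < a ^ 2 / 2 := div_lt_div_of_pos_left ha₀ two_pos he
  constructor
  · nlinarith [sq_nonneg (a - 2 * b)]
  · nlinarith [sq_nonneg (a - b)]

theorem alpha_two_sided_bounds_general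
    (T : ℝ) (ℓ m : ℕ) (β : ℝ)
    (α : ℝ → Fin ℓ → ℝ)
    (z : ℝ → ℝ)
    (u : ℝ → Fin m → ℝ)
    (hu : IntervalIntegrable (fun s => ∑ k, (u s k) ^ 2) volume 0 T)
    (B₁ : ℝ → Matrix (Fin ℓ) (Fin m) ℝ)
    (hB₁ : ∀ (s : ℝ) (v : Fin m → ℝ),
        Real.sqrt (∑ i, ((B₁ s).mulVec v i) ^ 2)
          ≤ Real.sqrt ℓ * β * Real.sqrt (∑ j, (v j) ^ 2))
    (g' : ℝ → ℝ)
    (hderiv : ∀ t ∈ Set.Icc (0:ℝ) T, HasDerivAt (fun s => ∑ i, (α s i) ^ 2) (g' t) t)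
    -- the scalar energy identity `(1/2) d/dt ‖α(t)‖² = α(t)ᵀ B₁(z(t)) u(t)` a.e.
    (henergy : ∀ᵐ t ∂volume, t ∈ Set.Icc (0:ℝ) T →
        (1 / 2) * g' t = α t ⬝ᵥ (B₁ (z t)).mulVec (u t))
    (hsmall : (∫ s in (0:ℝ)..T, ∑ k, (u s k) ^ 2)
        < (∑ i, (α 0 i) ^ 2) / (β ^ 2 * Real.exp 1 * T * ℓ)) :
    ∀ t ∈ Set.Icc (0:ℝ) T,
      T * ℓ * β ^ 2 *
          ((∑ i, (α 0 i) ^ 2) / (β ^ 2 * Real.exp 1 * T * ℓ)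
            - ∫ s in (0:ℝ)..T, ∑ k, (u s k) ^ 2)
        < (∑ i, (α t i) ^ 2) ∧
      (∑ i, (α t i) ^ 2) < (Real.exp 1 + 1) * ∑ i, (α 0 i) ^ 2 := by
  intro t ht
  have hT : 0 ≤ T := ht.1.trans ht.2
  have hK : β ^ 2 * Real.exp 1 * T * ℓ ≠ 0 := by
    intro h
    rw [h, div_zero] at hsmall
    exact hsmall.not_ge (intervalIntegral.integral_nonneg hT fun s _ => by positivity)
  have hβ : β ≠ 0 := by rintro rfl; simp at hK
  have hT₀ : 0 < T := hT.lt_of_ne' (by rintro rfl; simp at hK)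
  have hℓ : 0 < (ℓ : ℝ) := Nat.cast_pos.2 (Nat.pos_of_ne_zero (by rintro rfl; simp at hK))
  have hsqrt_diff := abs_sqrt_sum_sq_sub_le_integral (A := fun s => B₁ (z s)) ht hu.sqrt
    (fun s => hB₁ (z s)) hderiv henergy
  have hcs : (|√ℓ * β| * ∫ s in (0:ℝ)..T, √(∑ k, u s k ^ 2)) ^ 2
      ≤ T * ℓ * β ^ 2 * ∫ s in (0:ℝ)..T, ∑ k, (u s k) ^ 2 := by
    have := sq_integral_sqrt_le hT hu (fun s _ => by positivity)
    rw [sub_zero] at this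
    rw [mul_pow, sq_abs, mul_pow, Real.sq_sqrt hℓ.le]
    nlinarith [mul_le_mul_of_nonneg_left this (by positivity : (0:ℝ) ≤ ℓ * β ^ 2)]
  have hscale : T * ℓ * β ^ 2 * ((∑ i, (α 0 i) ^ 2) / (β ^ 2 * Real.exp 1 * T * ℓ))
      = (∑ i, (α 0 i) ^ 2) / Real.exp 1 := by
    field_simp
  have hsmall' : T * ℓ * β ^ 2 * (∫ s in (0:ℝ)..T, ∑ k, (u s k) ^ 2)
      < √(∑ i, (α 0 i) ^ 2) ^ 2 / Real.exp 1 := by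
    rw [Real.sq_sqrt (by positivity), ← hscale]
    exact mul_lt_mul_of_pos_left hsmall (by positivity)
  obtain ⟨hlower, hupper⟩ := sq_bounds_of_abs_sub_le (Real.sqrt_nonneg _)
    (by linarith [Real.add_one_lt_exp (x := 1) one_ne_zero]) hsqrt_diff hcs hsmall'
  rw [Real.sq_sqrt (by positivity), Real.sq_sqrt (by positivity)] at hlower hupper
  exact ⟨by rwa [mul_sub, hscale], hupper⟩

/-- Energy bounds for the reduced state: if `(1/2) d/dt ‖α(t)‖² = α(t)ᵀB₁(z(t))u(t)` a.e.,
with the pointwise bound `‖B₁(z)v‖ ≤ √ℓ·β·‖v‖` (`β = ‖B‖`), and the control is small,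
`‖u‖²_{L²(0,T)} < ‖α(0)‖²/(β²·e·T·ℓ)`, then for all `t ∈ [0,T]`:
`T·ℓ·β²·ζ < ‖α(t)‖² < (e+1)‖α(0)‖²`, where
`ζ := ‖α(0)‖²/(β²·e·T·ℓ) - ‖u‖²_{L²(0,T)}`. -/
theorem alpha_two_sided_bounds
    (T : ℝ) (hT : 0 < T) (ℓ m : ℕ) (β : ℝ) (hβ : 0 < β)
    (α : ℝ → Fin ℓ → ℝ) (hα0 : α 0 ≠ 0)
    (z : ℝ → ℝ) (hz : Measurable z)
    (u : ℝ → Fin m → ℝ)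
    (hu : IntervalIntegrable (fun s => ∑ k, (u s k) ^ 2) volume 0 T)
    (B₁ : ℝ → Matrix (Fin ℓ) (Fin m) ℝ)
    (hB₁ : ∀ (s : ℝ) (v : Fin m → ℝ),
        Real.sqrt (∑ i, ((B₁ s).mulVec v i) ^ 2)
          ≤ Real.sqrt ℓ * β * Real.sqrt (∑ j, (v j) ^ 2))
    (g' : ℝ → ℝ)
    (hderiv : ∀ t ∈ Set.Icc (0:ℝ) T, HasDerivAt (fun s => ∑ i, (α s i) ^ 2) (g' t) t)
    -- the scalar energy identity `(1/2) d/dt ‖α(t)‖² = α(t)ᵀ B₁(z(t)) u(t)` a.e.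
    (henergy : ∀ᵐ t ∂volume, t ∈ Set.Icc (0:ℝ) T →
        (1 / 2) * g' t = α t ⬝ᵥ (B₁ (z t)).mulVec (u t))
    (hsmall : (∫ s in (0:ℝ)..T, ∑ k, (u s k) ^ 2)
        < (∑ i, (α 0 i) ^ 2) / (β ^ 2 * Real.exp 1 * T * ℓ)) :
    ∀ t ∈ Set.Icc (0:ℝ) T,
      T * ℓ * β ^ 2 *
          ((∑ i, (α 0 i) ^ 2) / (β ^ 2 * Real.exp 1 * T * ℓ)
            - ∫ s in (0:ℝ)..T, ∑ k, (u s k) ^ 2)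
        < (∑ i, (α t i) ^ 2) ∧
      (∑ i, (α t i) ^ 2) < (Real.exp 1 + 1) * ∑ i, (α 0 i) ^ 2 :=
  alpha_two_sided_bounds_general T ℓ m β α z u hu B₁ hB₁ g' hderiv henergy hsmall
end
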